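/- If a sequence of parameters satisfies ‖Δ_1^{(n)}‖_2 → 0 and ‖τ^{(n)} - I_p‖_2 → 0, then the standardized score T^{(1)} (hard or soft assignment) converges almost surely to Z. -/

import Mathlib

open Matrix MeasureTheory ProbabilityTheory Filter

/-- Multivariate Gaussian density `φ(y; μ, Σ)` on `ℝ^p`. -/
noncomputable def gphi (p : ℕ) (μ : Fin p → ℝ) (Sig : Matrix (Fin p) (Fin p) ℝ)
    (y : Fin p → ℝ) : ℝ :=
  (2 * Real.pi) ^ (-(p : ℝ) / 2) * Sig.det ^ (-(1 : ℝ) / 2)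
    * Real.exp (-((y - μ) ⬝ᵥ Sig⁻¹.mulVec (y - μ)) / 2)

/-- Posterior probability `w₁ = π₁ φ₁(y)/(π₁ φ₁(y) + π₂ φ₂(y))` of class 1. -/
noncomputable def wpost (p : ℕ) (μ₁ μ₂ : Fin p → ℝ)
    (Sig₁ Sig₂ : Matrix (Fin p) (Fin p) ℝ) (π₁ π₂ : ℝ) (y : Fin p → ℝ) : ℝ :=
  π₁ * gphi p μ₁ Sig₁ y / (π₁ * gphi p μ₁ Sig₁ y + π₂ * gphi p μ₂ Sig₂ y)

/-- Standardized score `T⁽¹⁾ = (ŝ₁ Σ₁^{-1/2} + ŝ₂ Σ₂^{-1/2})(y - ŝ₁ μ₁ - ŝ₂ μ₂)`,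
with `ŝ₂ = 1 - ŝ₁` and `S i = Σ_i^{1/2}`. -/
noncomputable def Tstd (p : ℕ) (μ₁ μ₂ : Fin p → ℝ)
    (S₁ S₂ : Matrix (Fin p) (Fin p) ℝ) (s1 : ℝ) (y : Fin p → ℝ) : Fin p → ℝ :=
  (s1 • S₁⁻¹ + (1 - s1) • S₂⁻¹).mulVec (y - s1 • μ₁ - (1 - s1) • μ₂)

/-- Euclidean norm of a vector in `ℝ^p`. -/
noncomputable def enorm2 (p : ℕ) (v : Fin p → ℝ) : ℝ := Real.sqrt (∑ i, v i ^ 2)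

/-- Frobenius norm of a `p × p` real matrix. -/
noncomputable def frob (p : ℕ) (M : Matrix (Fin p) (Fin p) ℝ) : ℝ :=
  Real.sqrt (∑ i, ∑ j, M i j ^ 2)

/-! With `τ = S₂⁻¹ S₁` and `δ = S₁⁻¹ (μ₁ - μ₂)`, a class-1 observation `Y = S₁ Z + μ₁` gives
`T = Z + (1 - ŝ) (τ Z - Z + ŝ δ + (1 - ŝ) τ δ)` and a class-2 observation `Y = S₂ Z + μ₂` gives
`T = Z + ŝ (τ⁻¹ Z - Z - ŝ δ - (1 - ŝ) τ δ)`. Both assignment rules keep `ŝ ∈ [0, 1]`, so as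
`δ → 0` and `τ → 1` the bracket tends to `0` and `T → Z`, for every outcome of `(Z, c)`. -/

open scoped Topology
open Set

section Convergence

variable {α : Type*} {l : Filter α}

theorem Filter.Tendsto.matrix_mulVec {m n R : Type*} [Fintype n] [TopologicalSpace R]
    [NonUnitalNonAssocSemiring R] [ContinuousAdd R] [ContinuousMul R]
    {A : α → Matrix m n R} {v : α → n → R} {A₀ : Matrix m n R} {v₀ : n → R}
    (hA : Tendsto A l (𝓝 A₀)) (hv : Tendsto v l (𝓝 v₀)) :
    Tendsto (fun x => A x *ᵥ v x) l (𝓝 (A₀ *ᵥ v₀)) :=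
  ((continuous_fst.matrix_mulVec continuous_snd).tendsto (A₀, v₀)).comp (hA.prodMk_nhds hv)

lemma tendsto_matrix_inv_nhds_one {𝕜 n : Type*} [Field 𝕜] [TopologicalSpace 𝕜]
    [IsTopologicalDivisionRing 𝕜] [Fintype n] [DecidableEq n]
    {A : α → Matrix n n 𝕜} (hA : Tendsto A l (𝓝 1)) :
    Tendsto (fun x => (A x)⁻¹) l (𝓝 1) := by
  have hdet : ContinuousAt Ring.inverse (1 : Matrix n n 𝕜).det := by
    rw [Ring.inverse_eq_inv', det_one]
    exact continuousAt_inv₀ one_ne_zero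
  simpa [Function.comp_def] using (continuousAt_matrix_inv 1 hdet).tendsto.comp hA

lemma tendsto_smul_zero_of_mem_Icc {E : Type*} [SeminormedAddCommGroup E] [NormedSpace ℝ E]
    {s : α → ℝ} {u : α → E} (hs : ∀ x, s x ∈ Icc (0 : ℝ) 1) (hu : Tendsto u l (𝓝 0)) :
    Tendsto (fun x => s x • u x) l (𝓝 0) :=
  (isBoundedUnder_of ⟨1, fun x => abs_le.2 ⟨by linarith [(hs x).1], (hs x).2⟩⟩).smul_tendsto_zero hu

lemma abs_le_enorm2 {p : ℕ} (v : Fin p → ℝ) (i : Fin p) : |v i| ≤ enorm2 p v := by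
  rw [enorm2, ← Real.sqrt_sq_eq_abs]
  exact Real.sqrt_le_sqrt (Finset.single_le_sum (fun j _ => sq_nonneg (v j)) (Finset.mem_univ i))

lemma abs_le_frob {p : ℕ} (M : Matrix (Fin p) (Fin p) ℝ) (i j : Fin p) : |M i j| ≤ frob p M := by
  rw [frob, ← Real.sqrt_sq_eq_abs]
  apply Real.sqrt_le_sqrt
  calc M i j ^ 2 ≤ ∑ k, M i k ^ 2 :=
        Finset.single_le_sum (fun k _ => sq_nonneg (M i k)) (Finset.mem_univ j)
    _ ≤ ∑ i', ∑ k, M i' k ^ 2 :=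
        Finset.single_le_sum (fun i' _ => Finset.sum_nonneg fun k _ => sq_nonneg (M i' k))
          (Finset.mem_univ i)

lemma tendsto_nhds_zero_of_enorm2 {p : ℕ} {v : α → Fin p → ℝ}
    (h : Tendsto (fun x => enorm2 p (v x)) l (𝓝 0)) : Tendsto v l (𝓝 0) :=
  tendsto_pi_nhds.2 fun i => squeeze_zero_norm (fun x => abs_le_enorm2 (v x) i) h

lemma tendsto_of_frob_sub {p : ℕ} {M : α → Matrix (Fin p) (Fin p) ℝ} {M₀ : Matrix (Fin p) (Fin p) ℝ}
    (h : Tendsto (fun x => frob p (M x - M₀)) l (𝓝 0)) : Tendsto M l (𝓝 M₀) :=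
  tendsto_pi_nhds.2 fun i => tendsto_pi_nhds.2 fun j => tendsto_sub_nhds_zero_iff.1 <|
    squeeze_zero_norm (fun x => abs_le_frob (M x - M₀) i j) h

end Convergence

lemma gphi_pos {p : ℕ} {μ : Fin p → ℝ} {Sig : Matrix (Fin p) (Fin p) ℝ}
    (h : 0 < Sig.det) (y : Fin p → ℝ) : 0 < gphi p μ Sig y := by
  unfold gphi
  positivity

lemma wpost_mem_Icc {p : ℕ} {μ₁ μ₂ : Fin p → ℝ} {Sig₁ Sig₂ : Matrix (Fin p) (Fin p) ℝ}
    {π₁ π₂ : ℝ} (h₁ : 0 < Sig₁.det) (h₂ : 0 < Sig₂.det) (hπ₁ : 0 < π₁) (hπ₂ : 0 < π₂)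
    (y : Fin p → ℝ) : wpost p μ₁ μ₂ Sig₁ Sig₂ π₁ π₂ y ∈ Icc (0 : ℝ) 1 := by
  have hA : 0 < π₁ * gphi p μ₁ Sig₁ y := mul_pos hπ₁ (gphi_pos h₁ y)
  have hB : 0 < π₂ * gphi p μ₂ Sig₂ y := mul_pos hπ₂ (gphi_pos h₂ y)
  exact ⟨div_nonneg hA.le (by linarith), (div_le_one (by linarith)).2 (by linarith)⟩

section Tstd

variable {p : ℕ} {μ₁ μ₂ : Fin p → ℝ} {S₁ S₂ : Matrix (Fin p) (Fin p) ℝ}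

lemma Tstd_class_one (h₁ : IsUnit S₁.det) (s : ℝ) (z : Fin p → ℝ) :
    Tstd p μ₁ μ₂ S₁ S₂ s (S₁ *ᵥ z + μ₁) =
      z + (1 - s) • ((S₂⁻¹ * S₁) *ᵥ z - z + s • (S₁⁻¹ *ᵥ (μ₁ - μ₂))
        + (1 - s) • ((S₂⁻¹ * S₁) *ᵥ (S₁⁻¹ *ᵥ (μ₁ - μ₂)))) := by
  have harg : S₁ *ᵥ z + μ₁ - s • μ₁ - (1 - s) • μ₂ = S₁ *ᵥ (z + (1 - s) • (S₁⁻¹ *ᵥ (μ₁ - μ₂))) := by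
    rw [mulVec_add, mulVec_smul, mulVec_mulVec, mul_nonsing_inv _ h₁, one_mulVec]
    module
  rw [Tstd, harg, mulVec_mulVec, add_mul, smul_mul, smul_mul, nonsing_inv_mul _ h₁, add_mulVec,
    smul_mulVec, smul_mulVec, one_mulVec, mulVec_add, mulVec_smul]
  module

lemma Tstd_class_two (h₁ : IsUnit S₁.det) (h₂ : IsUnit S₂.det) (s : ℝ) (z : Fin p → ℝ) :
    Tstd p μ₁ μ₂ S₁ S₂ s (S₂ *ᵥ z + μ₂) =
      z + s • ((S₂⁻¹ * S₁)⁻¹ *ᵥ z - z - s • (S₁⁻¹ *ᵥ (μ₁ - μ₂))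
        - (1 - s) • ((S₂⁻¹ * S₁) *ᵥ (S₁⁻¹ *ᵥ (μ₁ - μ₂)))) := by
  have hμ : μ₁ - μ₂ = S₁ *ᵥ (S₁⁻¹ *ᵥ (μ₁ - μ₂)) := by
    rw [mulVec_mulVec, mul_nonsing_inv _ h₁, one_mulVec]
  have harg : S₂ *ᵥ z + μ₂ - s • μ₁ - (1 - s) • μ₂
      = S₂ *ᵥ (z - s • ((S₂⁻¹ * S₁) *ᵥ (S₁⁻¹ *ᵥ (μ₁ - μ₂)))) := by
    rw [mulVec_sub, mulVec_smul, mulVec_mulVec, ← Matrix.mul_assoc, mul_nonsing_inv _ h₂,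
      Matrix.one_mul, ← hμ]
    module
  have hτ : (S₂⁻¹ * S₁)⁻¹ * (S₂⁻¹ * S₁) = 1 := nonsing_inv_mul _ (by
    rw [det_mul]; exact (isUnit_nonsing_inv_det _ h₂).mul h₁)
  have hτinv : (S₂⁻¹ * S₁)⁻¹ = S₁⁻¹ * S₂ := by
    rw [Matrix.mul_inv_rev, nonsing_inv_nonsing_inv _ h₂]
  rw [Tstd, harg, mulVec_mulVec, add_mul, smul_mul, smul_mul, nonsing_inv_mul _ h₂, add_mulVec,
    smul_mulVec, smul_mulVec, one_mulVec, mulVec_sub, mulVec_smul, mulVec_mulVec, ← hτinv, hτ,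
    one_mulVec, hτinv]
  module

end Tstd

section Limits

variable {α : Type*} {l : Filter α} {p : ℕ} {μ₁ μ₂ : α → Fin p → ℝ}
  {S₁ S₂ : α → Matrix (Fin p) (Fin p) ℝ} {s : α → ℝ}

lemma tendsto_Tstd_class_one (hS₁ : ∀ x, IsUnit (S₁ x).det) (hs : ∀ x, s x ∈ Icc (0 : ℝ) 1)
    (hδ : Tendsto (fun x => (S₁ x)⁻¹ *ᵥ (μ₁ x - μ₂ x)) l (𝓝 0))
    (hτ : Tendsto (fun x => (S₂ x)⁻¹ * S₁ x) l (𝓝 1)) (z : Fin p → ℝ) :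
    Tendsto (fun x => Tstd p (μ₁ x) (μ₂ x) (S₁ x) (S₂ x) (s x) (S₁ x *ᵥ z + μ₁ x)) l (𝓝 z) := by
  have hs' : ∀ x, 1 - s x ∈ Icc (0 : ℝ) 1 := fun x => Icc.mem_iff_one_sub_mem.1 (hs x)
  have hτz : Tendsto (fun x => ((S₂ x)⁻¹ * S₁ x) *ᵥ z - z) l (𝓝 0) := by
    simpa using (hτ.matrix_mulVec (tendsto_const_nhds (x := z))).sub_const z
  have hτδ := hτ.matrix_mulVec hδ
  rw [one_mulVec] at hτδ
  have hbracket := (hτz.add (tendsto_smul_zero_of_mem_Icc hs hδ)).add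
    (tendsto_smul_zero_of_mem_Icc hs' hτδ)
  rw [add_zero, add_zero] at hbracket
  simp only [Tstd_class_one (hS₁ _)]
  simpa using tendsto_const_nhds.add (tendsto_smul_zero_of_mem_Icc hs' hbracket)

lemma tendsto_Tstd_class_two (hS₁ : ∀ x, IsUnit (S₁ x).det) (hS₂ : ∀ x, IsUnit (S₂ x).det)
    (hs : ∀ x, s x ∈ Icc (0 : ℝ) 1)
    (hδ : Tendsto (fun x => (S₁ x)⁻¹ *ᵥ (μ₁ x - μ₂ x)) l (𝓝 0))
    (hτ : Tendsto (fun x => (S₂ x)⁻¹ * S₁ x) l (𝓝 1)) (z : Fin p → ℝ) :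
    Tendsto (fun x => Tstd p (μ₁ x) (μ₂ x) (S₁ x) (S₂ x) (s x) (S₂ x *ᵥ z + μ₂ x)) l (𝓝 z) := by
  have hs' : ∀ x, 1 - s x ∈ Icc (0 : ℝ) 1 := fun x => Icc.mem_iff_one_sub_mem.1 (hs x)
  have hτz : Tendsto (fun x => ((S₂ x)⁻¹ * S₁ x)⁻¹ *ᵥ z - z) l (𝓝 0) := by
    simpa using
      ((tendsto_matrix_inv_nhds_one hτ).matrix_mulVec (tendsto_const_nhds (x := z))).sub_const z
  have hτδ := hτ.matrix_mulVec hδ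
  rw [one_mulVec] at hτδ
  have hbracket := (hτz.sub (tendsto_smul_zero_of_mem_Icc hs hδ)).sub
    (tendsto_smul_zero_of_mem_Icc hs' hτδ)
  rw [sub_zero, sub_zero] at hbracket
  simp only [Tstd_class_two (hS₁ _) (hS₂ _)]
  simpa using tendsto_const_nhds.add (tendsto_smul_zero_of_mem_Icc hs hbracket)

end Limits

theorem stmt8_general {Ω : Type*} [MeasurableSpace Ω] (P : Measure Ω)
    (p : ℕ) (μ₁ μ₂ : ℕ → Fin p → ℝ)
    (Sig₁ Sig₂ S₁ S₂ : ℕ → Matrix (Fin p) (Fin p) ℝ)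
    (hSig₁ : ∀ n, (Sig₁ n).PosDef) (hSig₂ : ∀ n, (Sig₂ n).PosDef)
    (hS₁ : ∀ n, (S₁ n).PosDef) (hS₂ : ∀ n, (S₂ n).PosDef)
    (π₁ : ℝ) (hπ : π₁ ∈ Set.Ioo (0 : ℝ) 1)
    (Z : Ω → Fin p → ℝ) (c : Ω → Fin 2)
    (Y : ℕ → Ω → Fin p → ℝ)
    (hY : ∀ n ω, Y n ω =
      if c ω = 1 then (S₁ n).mulVec (Z ω) + μ₁ n else (S₂ n).mulVec (Z ω) + μ₂ n)
    (s1 : ℕ → (Fin p → ℝ) → ℝ)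
    (hassign :
      (∀ n, s1 n = fun y =>
        if 1 / 2 < wpost p (μ₁ n) (μ₂ n) (Sig₁ n) (Sig₂ n) π₁ (1 - π₁) y then 1 else 0)
      ∨ (∀ n, s1 n = fun y => wpost p (μ₁ n) (μ₂ n) (Sig₁ n) (Sig₂ n) π₁ (1 - π₁) y))
    -- ‖Δ₁⁽ⁿ⁾‖₂ → 0 and ‖τ⁽ⁿ⁾ - I_p‖₂ → 0:
    (hΔ : Tendsto (fun n => enorm2 p ((S₁ n)⁻¹.mulVec (μ₁ n - μ₂ n))) atTop (nhds 0))
    (hτ : Tendsto (fun n => frob p ((S₂ n)⁻¹ * S₁ n - 1)) atTop (nhds 0)) :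
    ∀ᵐ ω ∂P, Tendsto (fun n => Tstd p (μ₁ n) (μ₂ n) (S₁ n) (S₂ n)
      (s1 n (Y n ω)) (Y n ω)) atTop (nhds (Z ω)) := by
  have hS₁u : ∀ n, IsUnit (S₁ n).det := fun n => (hS₁ n).det_pos.ne'.isUnit
  have hS₂u : ∀ n, IsUnit (S₂ n).det := fun n => (hS₂ n).det_pos.ne'.isUnit
  have hs : ∀ n y, s1 n y ∈ Icc (0 : ℝ) 1 := by
    intro n y
    rcases hassign with hard | soft
    · simp only [hard n]; split_ifs <;> simp
    · simp only [soft n]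
      exact wpost_mem_Icc (hSig₁ n).det_pos (hSig₂ n).det_pos hπ.1 (sub_pos.2 hπ.2) y
  have hδ := tendsto_nhds_zero_of_enorm2 hΔ
  have hτ₁ := tendsto_of_frob_sub hτ
  refine ae_of_all P fun ω => ?_
  by_cases hc : c ω = 1
  · simp only [hY, hc, if_true]
    exact tendsto_Tstd_class_one hS₁u (fun n => hs n _) hδ hτ₁ (Z ω)
  · simp only [hY, hc, if_false]
    exact tendsto_Tstd_class_two hS₁u hS₂u (fun n => hs n _) hδ hτ₁ (Z ω)

/-- Theorem 1, part 3: if a sequence of parameters satisfies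
`‖Δ₁⁽ⁿ⁾‖₂ → 0` and `‖τ⁽ⁿ⁾ - I_p‖₂ → 0`, then the standardized score `T⁽¹⁾`
(hard or soft assignment) converges almost surely to `Z`. -/
theorem stmt8 {Ω : Type*} [MeasurableSpace Ω] (P : Measure Ω) [IsProbabilityMeasure P]
    (p : ℕ) (μ₁ μ₂ : ℕ → Fin p → ℝ)
    (Sig₁ Sig₂ S₁ S₂ : ℕ → Matrix (Fin p) (Fin p) ℝ)
    (hSig₁ : ∀ n, (Sig₁ n).PosDef) (hSig₂ : ∀ n, (Sig₂ n).PosDef)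
    (hS₁ : ∀ n, (S₁ n).PosDef) (hS₂ : ∀ n, (S₂ n).PosDef)
    (hsq₁ : ∀ n, S₁ n * S₁ n = Sig₁ n) (hsq₂ : ∀ n, S₂ n * S₂ n = Sig₂ n)
    (π₁ : ℝ) (hπ : π₁ ∈ Set.Ioo (0 : ℝ) 1)
    (Z : Ω → Fin p → ℝ) (c : Ω → Fin 2)
    (hZmeas : Measurable Z) (hcmeas : Measurable c)
    (hZ : Measure.map Z P = Measure.pi fun _ : Fin p => gaussianReal 0 1)
    (hc : P {ω | c ω = 1} = ENNReal.ofReal π₁)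
    (hindep : IndepFun Z c P)
    (Y : ℕ → Ω → Fin p → ℝ)
    (hY : ∀ n ω, Y n ω =
      if c ω = 1 then (S₁ n).mulVec (Z ω) + μ₁ n else (S₂ n).mulVec (Z ω) + μ₂ n)
    (s1 : ℕ → (Fin p → ℝ) → ℝ)
    (hassign :
      (∀ n, s1 n = fun y =>
        if 1 / 2 < wpost p (μ₁ n) (μ₂ n) (Sig₁ n) (Sig₂ n) π₁ (1 - π₁) y then 1 else 0)
      ∨ (∀ n, s1 n = fun y => wpost p (μ₁ n) (μ₂ n) (Sig₁ n) (Sig₂ n) π₁ (1 - π₁) y))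
    -- ‖Δ₁⁽ⁿ⁾‖₂ → 0 and ‖τ⁽ⁿ⁾ - I_p‖₂ → 0:
    (hΔ : Tendsto (fun n => enorm2 p ((S₁ n)⁻¹.mulVec (μ₁ n - μ₂ n))) atTop (nhds 0))
    (hτ : Tendsto (fun n => frob p ((S₂ n)⁻¹ * S₁ n - 1)) atTop (nhds 0)) :
    ∀ᵐ ω ∂P, Tendsto (fun n => Tstd p (μ₁ n) (μ₂ n) (S₁ n) (S₂ n)
      (s1 n (Y n ω)) (Y n ω)) atTop (nhds (Z ω)) :=
  stmt8_general P p μ₁ μ₂ Sig₁ Sig₂ S₁ S₂ hSig₁ hSig₂ hS₁ hS₂ π₁ hπ Z c Y hY s1 hassign hΔ hτ
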